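/- Let α, α₁, α₂ ∈ ℝ and let c_j : ℝ → ℝ (j ∈ ℕ) be differentiable moments such that all odd moments vanish (c_{2k+1}(t) = 0 for all k ∈ ℕ and t ∈ ℝ) and c_j'(t) = α j c_j(t) + α₁ c_{j+2}(t) + α₂ c_{j+4}(t) for all j and t, with Δ_n(t) ≠ 0 for all n ≥ 1 and all t. Then for every integer n ≥ 4, every t ∈ ℝ and every λ₀ ∈ ℝ, the function t ↦ P_n(λ₀e^{αt}; t) is differentiable and (d/dt) P_n(λ₀e^{αt}; t) = n α P_n(λ₀e^{αt}; t) − a_{n−1}²(t) a_n²(t)(α₁ + α₂(a_{n−2}²(t) + a_{n−1}²(t) + a_n²(t) + a_{n+1}²(t))) P_{n−2}(λ₀e^{αt}; t) − α₂ a_{n−3}²(t) a_{n−2}²(t) a_{n−1}²(t) a_n²(t) P_{n−4}(λ₀e^{αt}; t). -/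

import Mathlib

/-- Hankel determinant `Δ_n(t) = det (c_{i+j}(t))_{0 ≤ i,j ≤ n-1}` (with `Δ_0 = 1`). -/
noncomputable def hankelDet (c : ℕ → ℝ → ℝ) (n : ℕ) (t : ℝ) : ℝ :=
  Matrix.det (Matrix.of fun i j : Fin n => c (i.1 + j.1) t)

/-- Recurrence coefficient `a_n²(t) = Δ_{n+1} Δ_{n-1} / Δ_n²`. -/
noncomputable def aSq (c : ℕ → ℝ → ℝ) (n : ℕ) (t : ℝ) : ℝ :=
  hankelDet c (n + 1) t * hankelDet c (n - 1) t / (hankelDet c n t) ^ 2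

/-- The monic orthogonal polynomial `P_n(λ; t)`: `Δ_n(t)⁻¹` times the determinant of the
`(n+1)×(n+1)` matrix whose `i`-th row (`0 ≤ i ≤ n-1`) is `(c_i, c_{i+1}, …, c_{i+n})` and
whose last row is `(1, λ, λ², …, λⁿ)`. -/
noncomputable def opoly (c : ℕ → ℝ → ℝ) (n : ℕ) (lam t : ℝ) : ℝ :=
  (hankelDet c n t)⁻¹ *
    Matrix.det (Matrix.of fun i j : Fin (n + 1) =>
      if i.1 = n then lam ^ j.1 else c (i.1 + j.1) t)

/-!
Expanding the determinant defining `P_n(·; t)` along its last row writes `P_n` as a polynomial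
whose coefficients are signed cofactors of the moment matrix, hence differentiable in `t`. Let
`L_t` be the moment functional `λ^j ↦ c_j(t)`. As the Hankel matrix is invertible, a polynomial
`p` of degree `< n` with `L_t(λ^m p) = 0` for all `m < n` vanishes; this proves the recurrence
`P_{n+2} = λ P_{n+1} - a_{n+1}² P_n` (odd moments vanish, so `L_t(λ^m P_n) = 0` when `n + m` is
odd). The moment equations say `∂_t L_t(p) = L_t(α λ p' + α₁ λ² p + α₂ λ⁴ p)`, so differentiating
`L_t(λ^m P_n) = 0` gives, for `m < n`,
`L_t(λ^m (∂_t P_n + α λ ∂_λ P_n)) = -α₁ L_t(λ^{m+2} P_n) - α₂ L_t(λ^{m+4} P_n)`.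
The recurrence evaluates the right-hand side, and by the same uniqueness argument
`∂_t P_n + α λ ∂_λ P_n`, the derivative of `P_n(λ₀ e^{αt}; t)`, is the claimed combination of
`P_n`, `P_{n-2}` and `P_{n-4}`.
-/

open Polynomial Finset

theorem Matrix.det_eq_zero_of_odd_checkerboard {R n : Type*} [CommRing R] [NoZeroDivisors R]
    [CharZero R] [Fintype n] [DecidableEq n] (M : Matrix n n R) (f g : n → ℕ)
    (hM : ∀ i j, Odd (f i + g j) → M i j = 0) (hfg : Odd (∑ i, f i + ∑ j, g j)) :
    M.det = 0 := by
  have hsign : diagonal (fun i => (-1 : R) ^ f i) * M * diagonal (fun j => (-1) ^ g j) = M := by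
    ext i j
    rw [mul_diagonal, diagonal_mul]
    rcases Nat.even_or_odd (f i + g j) with h | h
    · rw [mul_right_comm, ← pow_add, h.neg_one_pow, one_mul]
    · rw [hM i j h, mul_zero, zero_mul]
  have := congrArg det hsign
  rw [det_mul, det_mul, det_diagonal, det_diagonal, prod_pow_eq_pow_sum, prod_pow_eq_pow_sum,
    mul_right_comm, ← pow_add, hfg.neg_one_pow, neg_one_mul] at this
  exact CharZero.neg_eq_self_iff.mp this

theorem Polynomial.X_mul_derivative_X_pow_mul {R : Type*} [CommSemiring R] (m : ℕ) (p : R[X]) :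
    X * derivative (X ^ m * p) = C (m : R) * (X ^ m * p) + X ^ m * (X * derivative p) := by
  rw [derivative_mul, derivative_X_pow]
  rcases m with _ | m
  · simp
  · rw [Nat.add_sub_cancel]
    ring

theorem Polynomial.coeff_X_mul_derivative {R : Type*} [CommSemiring R] (p : R[X]) (j : ℕ) :
    (X * derivative p).coeff j = j * p.coeff j := by
  rcases j with _ | j
  · simp
  · rw [coeff_X_mul, coeff_derivative]
    push_cast
    ring

section Calculus

variable {𝕜 : Type*} [NontriviallyNormedField 𝕜]

theorem DifferentiableAt.matrix_det {E n : Type*} [NormedAddCommGroup E] [NormedSpace 𝕜 E]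
    [Fintype n] [DecidableEq n] {A : E → Matrix n n 𝕜} {t : E}
    (hA : ∀ i j, DifferentiableAt 𝕜 (fun s => A s i j) t) :
    DifferentiableAt 𝕜 (fun s => (A s).det) t := by
  simp only [Matrix.det_apply]
  fun_prop

theorem Polynomial.natDegree_le_of_hasDerivAt_coeff {p : 𝕜 → 𝕜[X]} {q : 𝕜[X]} {t : 𝕜} {N : ℕ}
    (hdeg : ∀ s, (p s).natDegree ≤ N)
    (hp : ∀ j, HasDerivAt (fun s => (p s).coeff j) (q.coeff j) t) :
    q.natDegree ≤ N := by
  refine natDegree_le_iff_coeff_eq_zero.mpr fun j hj => ?_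
  have hzero : ∀ s, (p s).coeff j = 0 := fun s =>
    coeff_eq_zero_of_natDegree_lt ((hdeg s).trans_lt (by exact_mod_cast hj))
  exact (hp j).unique ((hasDerivAt_const t 0).congr_of_eventuallyEq (.of_forall hzero))

theorem Polynomial.hasDerivAt_eval_of_hasDerivAt_coeff {p : 𝕜 → 𝕜[X]} {q : 𝕜[X]} {x : 𝕜 → 𝕜}
    {x' t : 𝕜} {N : ℕ} (hdeg : ∀ s, (p s).natDegree ≤ N)
    (hp : ∀ j, HasDerivAt (fun s => (p s).coeff j) (q.coeff j) t) (hx : HasDerivAt x x' t) :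
    HasDerivAt (fun s => (p s).eval (x s))
      (q.eval (x t) + x' * (p t).derivative.eval (x t)) t := by
  have hq : q.natDegree < N + 1 := Nat.lt_succ_of_le (natDegree_le_of_hasDerivAt_coeff hdeg hp)
  have hpt : (p t).natDegree < N + 1 := Nat.lt_succ_of_le (hdeg t)
  rw [eval_eq_sum_range' hq, derivative_eval, sum_over_range' _ (by simp) _ hpt, mul_sum,
    ← sum_add_distrib]
  simp only [eval_eq_sum_range' (Nat.lt_succ_of_le (hdeg _))]
  refine HasDerivAt.fun_sum fun j _ => ((hp j).mul (hx.pow j)).congr_deriv ?_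
  rw [Pi.pow_apply]
  ring

end Calculus

section OrthogonalPolynomials

variable (c : ℕ → ℝ → ℝ)

theorem hankelDet_zero (t : ℝ) : hankelDet c 0 t = 1 :=
  Matrix.det_isEmpty

noncomputable def momentFunctional (t : ℝ) : ℝ[X] →ₗ[ℝ] ℝ :=
  lsum fun j => LinearMap.mulRight ℝ (c j t)

theorem momentFunctional_C_mul_X_pow (t a : ℝ) (j : ℕ) :
    momentFunctional c t (C a * X ^ j) = a * c j t := by
  simp [momentFunctional, C_mul_X_pow_eq_monomial]

theorem momentFunctional_X_pow (t : ℝ) (j : ℕ) : momentFunctional c t (X ^ j) = c j t := by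
  simpa using momentFunctional_C_mul_X_pow c t 1 j

theorem momentFunctional_C_mul (t a : ℝ) (p : ℝ[X]) :
    momentFunctional c t (C a * p) = a * momentFunctional c t p := by
  rw [C_mul', map_smul, smul_eq_mul]

theorem momentFunctional_X_pow_mul_eq_sum {p : ℝ[X]} {N : ℕ} (hp : p.natDegree < N) (t : ℝ)
    (m : ℕ) : momentFunctional c t (X ^ m * p) = ∑ j ∈ range N, p.coeff j * c (j + m) t := by
  conv_lhs => rw [as_sum_range_C_mul_X_pow' p hp, mul_sum, map_sum]
  refine sum_congr rfl fun j _ => ?_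
  rw [mul_left_comm, ← pow_add, momentFunctional_C_mul_X_pow, add_comm m]

theorem momentFunctional_eq_sum {p : ℝ[X]} {N : ℕ} (hp : p.natDegree < N) (t : ℝ) :
    momentFunctional c t p = ∑ j ∈ range N, p.coeff j * c j t := by
  simpa using momentFunctional_X_pow_mul_eq_sum c hp t 0

theorem eq_zero_of_momentFunctional_X_pow_mul_eq_zero {p : ℝ[X]} {n : ℕ} {t : ℝ}
    (hΔ : hankelDet c n t ≠ 0) (hdeg : p.degree < n)
    (h : ∀ m < n, momentFunctional c t (X ^ m * p) = 0) : p = 0 := by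
  by_contra hp
  have hN : p.natDegree < n := (natDegree_lt_iff_degree_lt hp).mpr hdeg
  have hv : (Matrix.of fun i j : Fin n => c (i.1 + j.1) t).mulVec (fun j => p.coeff j) = 0 := by
    ext m
    rw [Pi.zero_apply, ← h m m.2, momentFunctional_X_pow_mul_eq_sum c hN, Matrix.mulVec,
      dotProduct, ← Fin.sum_univ_eq_sum_range (fun j => p.coeff j * c (j + m) t)]
    exact sum_congr rfl fun j _ => by rw [Matrix.of_apply, add_comm, mul_comm]
  refine hp (ext fun j => ?_)
  rcases lt_or_ge j n with hj | hj
  · exact congrFun (Matrix.eq_zero_of_mulVec_eq_zero hΔ hv) ⟨j, hj⟩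
  · exact coeff_eq_zero_of_natDegree_lt (hN.trans_le hj)

noncomputable def opolyCoeff (n : ℕ) (j : Fin (n + 1)) (t : ℝ) : ℝ :=
  (-1) ^ (n + j : ℕ) * (hankelDet c n t)⁻¹ *
    (Matrix.of fun i k : Fin n => c (i + j.succAbove k) t).det

/-- `P_n(·; t)` as a polynomial: the Laplace expansion of the determinant in `opoly` along its
last row. -/
noncomputable def orthoPoly (n : ℕ) (t : ℝ) : ℝ[X] :=
  ∑ j : Fin (n + 1), C (opolyCoeff c n j t) * X ^ (j : ℕ)

theorem map_orthoPoly (n : ℕ) (t : ℝ) (φ : ℝ[X] →ₗ[ℝ] ℝ) :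
    φ (orthoPoly c n t) = (hankelDet c n t)⁻¹ * (Matrix.of fun i j : Fin (n + 1) =>
      if i.1 = n then φ (X ^ j.1) else c (i.1 + j.1) t).det := by
  rw [Matrix.det_succ_row _ (Fin.last n), mul_sum, orthoPoly, map_sum]
  refine sum_congr rfl fun j _ => ?_
  have hminor : (Matrix.of fun i j : Fin (n + 1) =>
      if i.1 = n then φ (X ^ j.1) else c (i.1 + j.1) t).submatrix (Fin.last n).succAbove
        j.succAbove = Matrix.of fun i k : Fin n => c (i + j.succAbove k) t := by
    ext i k
    simp [i.isLt.ne]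
  rw [C_mul', map_smul, smul_eq_mul, hminor, Matrix.of_apply, Fin.val_last, if_pos rfl,
    opolyCoeff]
  ring

theorem eval_orthoPoly (n : ℕ) (lam t : ℝ) : (orthoPoly c n t).eval lam = opoly c n lam t := by
  rw [← leval_apply, map_orthoPoly]
  simp [opoly]

theorem momentFunctional_X_pow_mul_orthoPoly (n m : ℕ) (t : ℝ) :
    momentFunctional c t (X ^ m * orthoPoly c n t) = (hankelDet c n t)⁻¹ *
      (Matrix.of fun i j : Fin (n + 1) => c ((if i.1 = n then m else i.1) + j.1) t).det := by
  rw [← LinearMap.mulLeft_apply (R := ℝ), ← LinearMap.comp_apply, map_orthoPoly]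
  congr 2
  ext i j
  simp only [Matrix.of_apply]
  split_ifs <;> simp [← pow_add, momentFunctional_X_pow]

theorem coeff_orthoPoly (n : ℕ) (t : ℝ) (j : Fin (n + 1)) :
    (orthoPoly c n t).coeff j = opolyCoeff c n j t := by
  rw [orthoPoly, finsetSum_coeff, Fintype.sum_eq_single j]
  · simp
  · intro i hi
    rw [coeff_C_mul_X_pow, if_neg (Fin.val_injective.ne hi.symm)]

theorem coeff_orthoPoly_of_lt {n j : ℕ} (h : n < j) (t : ℝ) : (orthoPoly c n t).coeff j = 0 := by
  rw [orthoPoly, finsetSum_coeff]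
  exact sum_eq_zero fun i _ => by rw [coeff_C_mul_X_pow, if_neg (by omega)]

theorem natDegree_orthoPoly_le (n : ℕ) (t : ℝ) : (orthoPoly c n t).natDegree ≤ n :=
  natDegree_le_iff_coeff_eq_zero.mpr fun _ hj => coeff_orthoPoly_of_lt c (by exact_mod_cast hj) t

theorem coeff_orthoPoly_self {n : ℕ} {t : ℝ} (hΔ : hankelDet c n t ≠ 0) :
    (orthoPoly c n t).coeff n = 1 := by
  have hminor : (Matrix.of fun i k : Fin n => c (i + (Fin.last n).succAbove k) t) =
      Matrix.of fun i k : Fin n => c (i + k) t := by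
    simp
  have hcoeff := coeff_orthoPoly c n t (Fin.last n)
  rw [Fin.val_last] at hcoeff
  rw [hcoeff, opolyCoeff, hminor, Fin.val_last, ← two_mul, pow_mul, neg_one_sq, one_pow, one_mul]
  exact inv_mul_cancel₀ hΔ

theorem momentFunctional_X_pow_mul_orthoPoly_of_lt {n m : ℕ} (h : m < n) (t : ℝ) :
    momentFunctional c t (X ^ m * orthoPoly c n t) = 0 := by
  rw [momentFunctional_X_pow_mul_orthoPoly, Matrix.det_zero_of_row_eq
    (i := ⟨m, by omega⟩) (j := Fin.last n) (by simp [Fin.ext_iff, h.ne]), mul_zero]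
  ext j
  simp [h.ne]

theorem momentFunctional_X_pow_mul_orthoPoly_self (n : ℕ) (t : ℝ) :
    momentFunctional c t (X ^ n * orthoPoly c n t) = hankelDet c (n + 1) t / hankelDet c n t := by
  rw [momentFunctional_X_pow_mul_orthoPoly, div_eq_inv_mul]
  congr 2
  ext i j
  rw [Matrix.of_apply, ite_eq_right_iff.mpr Eq.symm]
  rfl

theorem momentFunctional_X_pow_mul_orthoPoly_of_odd {t : ℝ} (hodd : ∀ k, c (2 * k + 1) t = 0)
    {n m : ℕ} (h : Odd (n + m)) : momentFunctional c t (X ^ m * orthoPoly c n t) = 0 := by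
  rw [momentFunctional_X_pow_mul_orthoPoly, Matrix.det_eq_zero_of_odd_checkerboard _
    (fun i => if i.1 = n then m else i.1) (fun j => j.1), mul_zero]
  · rintro i j ⟨k, hk⟩
    rw [Matrix.of_apply, hk, hodd]
  · simp only [Fin.sum_univ_castSucc (n := n), Fin.val_castSucc, Fin.val_last, if_pos,
      Fin.isLt, Nat.ne_of_lt, if_false]
    rw [add_add_add_comm, ← two_mul, add_comm m]
    exact (even_two_mul _).add_odd h

theorem aSq_succ_mul_div {k : ℕ} {t : ℝ} (h₀ : hankelDet c k t ≠ 0)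
    (h₁ : hankelDet c (k + 1) t ≠ 0) :
    aSq c (k + 1) t * (hankelDet c (k + 1) t / hankelDet c k t) =
      hankelDet c (k + 2) t / hankelDet c (k + 1) t := by
  rw [aSq, Nat.add_sub_cancel]
  field_simp

theorem orthoPoly_add_two {t : ℝ} (hodd : ∀ k, c (2 * k + 1) t = 0) {k : ℕ}
    (h₀ : hankelDet c k t ≠ 0) (h₁ : hankelDet c (k + 1) t ≠ 0)
    (h₂ : hankelDet c (k + 2) t ≠ 0) :
    orthoPoly c (k + 2) t = X * orthoPoly c (k + 1) t - C (aSq c (k + 1) t) * orthoPoly c k t := by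
  rw [← sub_eq_zero]
  refine eq_zero_of_momentFunctional_X_pow_mul_eq_zero c h₂ ?_ fun m hm => ?_
  · refine (degree_lt_iff_coeff_zero _ _).mpr fun j hj => ?_
    obtain ⟨j, rfl⟩ : ∃ i, j = i + 1 := ⟨j - 1, by omega⟩
    rw [coeff_sub, coeff_sub, coeff_X_mul, coeff_C_mul,
      coeff_orthoPoly_of_lt c (show k < j + 1 by omega)]
    rcases (Nat.succ_le_succ_iff.mp hj).eq_or_lt with rfl | hj
    · rw [coeff_orthoPoly_self c h₂, coeff_orthoPoly_self c h₁]
      ring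
    · rw [coeff_orthoPoly_of_lt c hj, coeff_orthoPoly_of_lt c (show k + 2 < j + 1 by omega)]
      ring
  · have hX : X ^ m * (X * orthoPoly c (k + 1) t) = X ^ (m + 1) * orthoPoly c (k + 1) t := by
      ring
    rw [mul_sub, mul_sub, mul_left_comm _ (C _), map_sub, map_sub, hX, momentFunctional_C_mul,
      momentFunctional_X_pow_mul_orthoPoly_of_lt c hm]
    rcases (show m < k ∨ m = k ∨ m = k + 1 by omega) with hm | rfl | rfl
    · rw [momentFunctional_X_pow_mul_orthoPoly_of_lt c (by omega),
        momentFunctional_X_pow_mul_orthoPoly_of_lt c hm]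
      ring
    · rw [momentFunctional_X_pow_mul_orthoPoly_self, momentFunctional_X_pow_mul_orthoPoly_self,
        aSq_succ_mul_div c h₀ h₁]
      ring
    · rw [momentFunctional_X_pow_mul_orthoPoly_of_odd c hodd ⟨k + 1, by ring⟩,
        momentFunctional_X_pow_mul_orthoPoly_of_odd c hodd ⟨k, by ring⟩]
      ring

theorem momentFunctional_X_pow_succ_mul_orthoPoly {t : ℝ} (hodd : ∀ k, c (2 * k + 1) t = 0)
    {k : ℕ} (h₀ : hankelDet c k t ≠ 0) (h₁ : hankelDet c (k + 1) t ≠ 0)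
    (h₂ : hankelDet c (k + 2) t ≠ 0) (m : ℕ) :
    momentFunctional c t (X ^ (m + 1) * orthoPoly c (k + 1) t) =
      momentFunctional c t (X ^ m * orthoPoly c (k + 2) t) +
        aSq c (k + 1) t * momentFunctional c t (X ^ m * orthoPoly c k t) := by
  rw [orthoPoly_add_two c hodd h₀ h₁ h₂, mul_sub, mul_left_comm _ (C _), map_sub,
    momentFunctional_C_mul, pow_succ, mul_assoc]
  ring

theorem momentFunctional_generator_eq_sum (α α₁ α₂ t : ℝ) {p : ℝ[X]} {N : ℕ}
    (hp : p.natDegree < N) :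
    momentFunctional c t (C α * X * derivative p + C α₁ * X ^ 2 * p + C α₂ * X ^ 4 * p) =
      ∑ j ∈ range N, p.coeff j * (α * j * c j t + α₁ * c (j + 2) t + α₂ * c (j + 4) t) := by
  conv_lhs => rw [as_sum_range_C_mul_X_pow' p hp]
  simp only [mul_sum, ← sum_add_distrib, map_sum]
  refine sum_congr rfl fun j _ => ?_
  set a := p.coeff j
  have e₀ : C α * X * derivative (C a * X ^ j) = C (α * a * j) * X ^ j := by
    rcases j with _ | j
    · simp
    · rw [derivative_C_mul_X_pow, Nat.add_sub_cancel, C_mul, C_mul, C_mul]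
      ring
  have e₂ : C α₁ * X ^ 2 * (C a * X ^ j) = C (α₁ * a) * X ^ (j + 2) := by
    rw [C_mul]
    ring
  have e₄ : C α₂ * X ^ 4 * (C a * X ^ j) = C (α₂ * a) * X ^ (j + 4) := by
    rw [C_mul]
    ring
  rw [e₀, e₂, e₄, map_add, map_add, momentFunctional_C_mul_X_pow, momentFunctional_C_mul_X_pow,
    momentFunctional_C_mul_X_pow]
  ring

theorem hasDerivAt_momentFunctional {α α₁ α₂ t : ℝ}
    (hc : ∀ j, HasDerivAt (fun s => c j s) (α * j * c j t + α₁ * c (j + 2) t + α₂ * c (j + 4) t) t)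
    {p : ℝ → ℝ[X]} {q : ℝ[X]} {N : ℕ} (hdeg : ∀ s, (p s).natDegree ≤ N)
    (hp : ∀ j, HasDerivAt (fun s => (p s).coeff j) (q.coeff j) t) :
    HasDerivAt (fun s => momentFunctional c s (p s)) (momentFunctional c t
      (q + (C α * X * derivative (p t) + C α₁ * X ^ 2 * p t + C α₂ * X ^ 4 * p t))) t := by
  have hq : q.natDegree < N + 1 := Nat.lt_succ_of_le (natDegree_le_of_hasDerivAt_coeff hdeg hp)
  rw [map_add, momentFunctional_eq_sum c hq,
    momentFunctional_generator_eq_sum c α α₁ α₂ t (Nat.lt_succ_of_le (hdeg t)), ← sum_add_distrib]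
  simp only [momentFunctional_eq_sum c (Nat.lt_succ_of_le (hdeg _))]
  exact HasDerivAt.fun_sum fun j _ => (hp j).mul (hc j)

theorem differentiableAt_opolyCoeff {n : ℕ} (j : Fin (n + 1)) {t : ℝ}
    (hc : ∀ j, DifferentiableAt ℝ (c j) t) (hΔ : hankelDet c n t ≠ 0) :
    DifferentiableAt ℝ (opolyCoeff c n j) t := by
  have hΔdiff : DifferentiableAt ℝ (hankelDet c n) t := DifferentiableAt.matrix_det fun _ _ => hc _
  exact ((hΔdiff.inv hΔ).const_mul _).mul (DifferentiableAt.matrix_det fun _ _ => hc _)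

theorem exists_hasDerivAt_coeff_orthoPoly {n : ℕ} {t : ℝ} (hc : ∀ j, DifferentiableAt ℝ (c j) t)
    (hΔ : hankelDet c n t ≠ 0) :
    ∃ q : ℝ[X], ∀ j, HasDerivAt (fun s => (orthoPoly c n s).coeff j) (q.coeff j) t := by
  refine ⟨∑ j ∈ range (n + 1), C (deriv (fun s => (orthoPoly c n s).coeff j) t) * X ^ j,
    fun j => ?_⟩
  simp only [finsetSum_coeff, coeff_C_mul_X_pow, sum_ite_eq, mem_range]
  split_ifs with hj
  · simp only [coeff_orthoPoly c n _ ⟨j, hj⟩]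
    exact (differentiableAt_opolyCoeff c ⟨j, hj⟩ hc hΔ).hasDerivAt
  · simpa [coeff_orthoPoly_of_lt c (not_lt.mp hj)] using hasDerivAt_const t (0 : ℝ)

theorem momentFunctional_X_pow_mul_timeDeriv_orthoPoly {α α₁ α₂ t : ℝ}
    (hc : ∀ j, HasDerivAt (fun s => c j s) (α * j * c j t + α₁ * c (j + 2) t + α₂ * c (j + 4) t) t)
    {n m : ℕ} (hm : m < n) {q : ℝ[X]}
    (hq : ∀ j, HasDerivAt (fun s => (orthoPoly c n s).coeff j) (q.coeff j) t) :
    momentFunctional c t (X ^ m * (q + C α * X * derivative (orthoPoly c n t))) =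
      -(α₁ * momentFunctional c t (X ^ (m + 2) * orthoPoly c n t) +
        α₂ * momentFunctional c t (X ^ (m + 4) * orthoPoly c n t)) := by
  have hderiv := hasDerivAt_momentFunctional c hc (p := fun s => X ^ m * orthoPoly c n s)
    (q := X ^ m * q) (N := m + n)
    (fun s => natDegree_mul_le.trans
      (add_le_add (natDegree_X_pow_le m) (natDegree_orthoPoly_le c n s)))
    (fun j => by
      simp only [coeff_X_pow_mul']
      split_ifs
      exacts [hq _, hasDerivAt_const t 0])
  have hzero : HasDerivAt (fun s => momentFunctional c s (X ^ m * orthoPoly c n s)) 0 t :=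
    (hasDerivAt_const t 0).congr_of_eventuallyEq
      (.of_forall fun s => momentFunctional_X_pow_mul_orthoPoly_of_lt c hm s)
  have hexpand : X ^ m * q + (C α * X * derivative (X ^ m * orthoPoly c n t) +
      C α₁ * X ^ 2 * (X ^ m * orthoPoly c n t) + C α₂ * X ^ 4 * (X ^ m * orthoPoly c n t)) =
      X ^ m * (q + C α * X * derivative (orthoPoly c n t)) +
        C (α * m) * (X ^ m * orthoPoly c n t) + C α₁ * (X ^ (m + 2) * orthoPoly c n t) +
        C α₂ * (X ^ (m + 4) * orthoPoly c n t) := by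
    rw [mul_assoc (C α), X_mul_derivative_X_pow_mul, C_mul]
    ring
  have hsum := hderiv.unique hzero
  rw [hexpand, map_add, map_add, map_add, momentFunctional_C_mul, momentFunctional_C_mul,
    momentFunctional_C_mul, momentFunctional_X_pow_mul_orthoPoly_of_lt c hm] at hsum
  linear_combination hsum

theorem momentFunctional_X_pow_mul_orthoPoly_relation (α₁ α₂ : ℝ) {t : ℝ}
    (hodd : ∀ k, c (2 * k + 1) t = 0) (hΔ : ∀ n, hankelDet c n t ≠ 0) {k m : ℕ} (hm : m < k + 4) :
    -(α₁ * momentFunctional c t (X ^ (m + 2) * orthoPoly c (k + 4) t) +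
        α₂ * momentFunctional c t (X ^ (m + 4) * orthoPoly c (k + 4) t)) +
      aSq c (k + 3) t * aSq c (k + 4) t * (α₁ + α₂ * (aSq c (k + 2) t + aSq c (k + 3) t +
        aSq c (k + 4) t + aSq c (k + 5) t)) * momentFunctional c t (X ^ m * orthoPoly c (k + 2) t) +
      α₂ * aSq c (k + 1) t * aSq c (k + 2) t * aSq c (k + 3) t * aSq c (k + 4) t *
        momentFunctional c t (X ^ m * orthoPoly c k t) = 0 := by
  set M : ℕ → ℕ → ℝ := fun n m => momentFunctional c t (X ^ m * orthoPoly c n t)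
  set h : ℕ → ℝ := fun n => hankelDet c (n + 1) t / hankelDet c n t
  have hself : ∀ n, M n n = h n := fun n => momentFunctional_X_pow_mul_orthoPoly_self c n t
  have hlt : ∀ {n m}, m < n → M n m = 0 := fun h => momentFunctional_X_pow_mul_orthoPoly_of_lt c h t
  have hrec : ∀ n, aSq c (n + 1) t * h n = h (n + 1) := fun n =>
    aSq_succ_mul_div c (hΔ n) (hΔ (n + 1))
  have hshift : ∀ n, M (n + 1) (n + 3) = h (n + 2) + aSq c (n + 1) t * M n (n + 2) := fun n => by
    rw [← hself]
    exact momentFunctional_X_pow_succ_mul_orthoPoly c hodd (hΔ _) (hΔ _) (hΔ _) (n + 2)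
  show -(α₁ * M (k + 4) (m + 2) + α₂ * M (k + 4) (m + 4)) + _ * M (k + 2) m + _ * M k m = 0
  rcases Nat.even_or_odd (k + m) with ⟨r, hr⟩ | hkm
  · rcases (show m < k ∨ m = k ∨ m = k + 2 by omega) with hmk | hmk | hmk
    · rw [hlt (by omega), hlt (by omega), hlt (by omega), hlt hmk]
      ring
    · subst m
      have r₁ : aSq c (k + 1) t * h k = h (k + 1) := hrec k
      have r₂ : aSq c (k + 2) t * h (k + 1) = h (k + 2) := hrec (k + 1)
      have r₃ : aSq c (k + 3) t * h (k + 2) = h (k + 3) := hrec (k + 2)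
      have r₄ : aSq c (k + 4) t * h (k + 3) = h (k + 4) := hrec (k + 3)
      rw [hlt (by omega), hself, hlt (by omega), hself, ← r₄, ← r₃, ← r₂, ← r₁]
      ring
    · subst m
      have r₃ : aSq c (k + 3) t * h (k + 2) = h (k + 3) := hrec (k + 2)
      have r₄ : aSq c (k + 4) t * h (k + 3) = h (k + 4) := hrec (k + 3)
      have r₅ : aSq c (k + 5) t * h (k + 4) = h (k + 5) := hrec (k + 4)
      have s₁ : M (k + 1) (k + 3) = h (k + 2) + aSq c (k + 1) t * M k (k + 2) := hshift k
      have s₂ : M (k + 2) (k + 4) = h (k + 3) + aSq c (k + 2) t * M (k + 1) (k + 3) :=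
        hshift (k + 1)
      have s₃ : M (k + 3) (k + 5) = h (k + 4) + aSq c (k + 3) t * M (k + 2) (k + 4) :=
        hshift (k + 2)
      have s₄ : M (k + 4) (k + 6) = h (k + 5) + aSq c (k + 4) t * M (k + 3) (k + 5) :=
        hshift (k + 3)
      rw [hself, hself, s₄, s₃, s₂, s₁, ← r₅, ← r₄, ← r₃]
      ring
  · have hpar : ∀ {n m}, Odd (n + m) → M n m = 0 := fun h =>
      momentFunctional_X_pow_mul_orthoPoly_of_odd c hodd h
    rw [hpar (by grind), hpar (by grind), hpar (by grind), hpar (by grind)]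
    ring

theorem timeDeriv_orthoPoly_eq {α α₁ α₂ t : ℝ} (hodd : ∀ k, c (2 * k + 1) t = 0)
    (hc : ∀ j, HasDerivAt (fun s => c j s) (α * j * c j t + α₁ * c (j + 2) t + α₂ * c (j + 4) t) t)
    (hΔ : ∀ n s, hankelDet c n s ≠ 0) (k : ℕ) {q : ℝ[X]}
    (hq : ∀ j, HasDerivAt (fun s => (orthoPoly c (k + 4) s).coeff j) (q.coeff j) t) :
    q + C α * X * derivative (orthoPoly c (k + 4) t) =
      C ((k + 4 : ℕ) * α) * orthoPoly c (k + 4) t -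
        C (aSq c (k + 3) t * aSq c (k + 4) t * (α₁ + α₂ * (aSq c (k + 2) t + aSq c (k + 3) t +
          aSq c (k + 4) t + aSq c (k + 5) t))) * orthoPoly c (k + 2) t -
        C (α₂ * aSq c (k + 1) t * aSq c (k + 2) t * aSq c (k + 3) t * aSq c (k + 4) t) *
          orthoPoly c k t := by
  rw [← sub_eq_zero]
  refine eq_zero_of_momentFunctional_X_pow_mul_eq_zero c (hΔ (k + 4) t) ?_ fun m hm => ?_
  · have hq_top : ∀ j, k + 4 ≤ j → q.coeff j = 0 := fun j hj => by
      rcases hj.eq_or_lt with rfl | hj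
      · exact (hq _).unique ((hasDerivAt_const t 1).congr_of_eventuallyEq
          (.of_forall fun s => coeff_orthoPoly_self c (hΔ _ s)))
      · exact coeff_eq_zero_of_natDegree_lt <|
          (natDegree_le_of_hasDerivAt_coeff (natDegree_orthoPoly_le c _) hq).trans_lt hj
    refine (degree_lt_iff_coeff_zero _ _).mpr fun j hj => ?_
    simp only [coeff_sub, coeff_add, mul_assoc (C α), coeff_C_mul, coeff_X_mul_derivative,
      hq_top j hj, coeff_orthoPoly_of_lt c (show k + 2 < j by omega),
      coeff_orthoPoly_of_lt c (show k < j by omega)]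
    rcases hj.eq_or_lt with rfl | hj
    · rw [coeff_orthoPoly_self c (hΔ _ t)]
      push_cast
      ring
    · rw [coeff_orthoPoly_of_lt c hj]
      ring
  · rw [mul_sub, map_sub, momentFunctional_X_pow_mul_timeDeriv_orthoPoly c hc hm hq]
    simp only [mul_sub, map_sub, mul_left_comm (X ^ m) (C _), momentFunctional_C_mul]
    rw [momentFunctional_X_pow_mul_orthoPoly_of_lt c hm]
    linear_combination
      momentFunctional_X_pow_mul_orthoPoly_relation c α₁ α₂ hodd (fun n => hΔ n t) hm

end OrthogonalPolynomials

theorem opoly_nonisospectral_evolution_symmetric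
    (α α₁ α₂ : ℝ) (c : ℕ → ℝ → ℝ)
    (hodd : ∀ (k : ℕ) (t : ℝ), c (2 * k + 1) t = 0)
    (hc : ∀ (j : ℕ) (t : ℝ), HasDerivAt (fun s => c j s)
      (α * j * c j t + α₁ * c (j + 2) t + α₂ * c (j + 4) t) t)
    (hΔ : ∀ n : ℕ, 1 ≤ n → ∀ t : ℝ, hankelDet c n t ≠ 0) :
    ∀ n : ℕ, 4 ≤ n → ∀ (t lam₀ : ℝ),
      HasDerivAt (fun s => opoly c n (lam₀ * Real.exp (α * s)) s)
        ((n : ℝ) * α * opoly c n (lam₀ * Real.exp (α * t)) t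
          - aSq c (n - 1) t * aSq c n t *
              (α₁ + α₂ * (aSq c (n - 2) t + aSq c (n - 1) t + aSq c n t + aSq c (n + 1) t)) *
              opoly c (n - 2) (lam₀ * Real.exp (α * t)) t
          - α₂ * aSq c (n - 3) t * aSq c (n - 2) t * aSq c (n - 1) t * aSq c n t *
              opoly c (n - 4) (lam₀ * Real.exp (α * t)) t) t := by
  intro n hn t lam₀
  obtain ⟨k, rfl⟩ : ∃ k, n = k + 4 := ⟨n - 4, by omega⟩
  have hΔ₀ : ∀ n s, hankelDet c n s ≠ 0 := fun n s => by
    rcases n.eq_zero_or_pos with rfl | hn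
    · exact (hankelDet_zero c s).symm ▸ one_ne_zero
    · exact hΔ n hn s
  obtain ⟨q, hq⟩ := exists_hasDerivAt_coeff_orthoPoly c (fun j => (hc j t).differentiableAt)
    (hΔ₀ (k + 4) t)
  have hx : HasDerivAt (fun s => lam₀ * Real.exp (α * s)) (α * (lam₀ * Real.exp (α * t))) t :=
    (((hasDerivAt_id' t).const_mul α).exp.const_mul lam₀).congr_deriv (by ring)
  have hP := hasDerivAt_eval_of_hasDerivAt_coeff (natDegree_orthoPoly_le c _) hq hx
  have hflow := congrArg (eval (lam₀ * Real.exp (α * t)))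
    (timeDeriv_orthoPoly_eq c (hodd · t) (hc · t) hΔ₀ k hq)
  simp only [eval_orthoPoly, eval_add, eval_sub, eval_mul, eval_C, eval_X] at hP hflow
  simp only [Nat.reduceSubDiff, add_tsub_cancel_right]
  refine hP.congr_deriv ?_
  rw [hflow]
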